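/- arXiv:1411.3757 — 2 statements merged into one kernel-verified Lean document; each statement's English description precedes it below -/
import Mathlib

section
/- If X_i are independent Bernoulli random variables with success probabilities p_i and Z is Poisson with mean M = Σ p_i, then the total variation distance between the law of Σ X_i and the Poisson distribution with mean M is at most Σ p_i². -/
open MeasureTheory ProbabilityTheory

/-- Total variation distance between two measures. -/
noncomputable def tvDist {X : Type*} [MeasurableSpace X] (μ ν : Measure X) : ℝ :=
  ⨆ A : {A : Set X // MeasurableSet A}, |(μ A.1).toReal - (ν A.1).toReal|

/-!
The law of a sum of independent variables is the convolution of their laws, and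
`Po(a) ∗ Po(b) = Po(a + b)`. Convolving two probability measures with a common third one does
not increase their total variation distance, hence
`d_TV(μ₁ ∗ μ₂, ν₁ ∗ ν₂) ≤ d_TV(μ₁, ν₁) + d_TV(μ₂, ν₂)`, and induction on the number of
summands reduces the inequality to a single Bernoulli(`p`) variable. Its law exceeds `Po(p)` only at `1`, by
`p - p e^{-p} ≤ p²`.
-/

open scoped NNReal ENNReal

section TotalVariation

variable {α : Type*} [MeasurableSpace α] {μ ν : Measure α}
  [IsProbabilityMeasure μ] [IsProbabilityMeasure ν]

lemma abs_sub_le_tvDist {A : Set α} (hA : MeasurableSet A) :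
    |μ.real A - ν.real A| ≤ tvDist μ ν :=
  le_ciSup (f := fun A : {A : Set α // MeasurableSet A} => |μ.real A - ν.real A|)
    ⟨1, by
      rintro _ ⟨A, rfl⟩
      exact abs_sub_le_of_nonneg_of_le measureReal_nonneg measureReal_le_one
        measureReal_nonneg measureReal_le_one⟩
    ⟨A, hA⟩

lemma tvDist_nonneg : 0 ≤ tvDist μ ν :=
  (abs_nonneg _).trans (abs_sub_le_tvDist (μ := μ) (ν := ν) MeasurableSet.empty)

lemma apply_le_add_tvDist {A : Set α} (hA : MeasurableSet A) :
    μ A ≤ ν A + ENNReal.ofReal (tvDist μ ν) := by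
  rw [← ofReal_measureReal, ← ofReal_measureReal, ← ENNReal.ofReal_add measureReal_nonneg
    tvDist_nonneg]
  have := (le_abs_self _).trans (abs_sub_le_tvDist (μ := μ) (ν := ν) hA)
  exact ENNReal.ofReal_le_ofReal (by linarith)

/-- For probability measures a one-sided bound suffices: the other side follows by passing
to complements. -/
lemma tvDist_le_of_forall_le_add {r : ℝ} (hr : 0 ≤ r)
    (h : ∀ A, MeasurableSet A → μ A ≤ ν A + ENNReal.ofReal r) : tvDist μ ν ≤ r := by
  have hreal : ∀ A, MeasurableSet A → μ.real A ≤ ν.real A + r := fun A hA => by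
    have := ENNReal.toReal_mono (by finiteness) (h A hA)
    rwa [ENNReal.toReal_add (by finiteness) ENNReal.ofReal_ne_top,
      ENNReal.toReal_ofReal hr] at this
  refine ciSup_le fun ⟨A, hA⟩ => abs_sub_le_iff.2 ⟨?_, ?_⟩
  · change μ.real A - ν.real A ≤ r
    linarith [hreal A hA]
  · have := hreal Aᶜ hA.compl
    rw [probReal_compl_eq_one_sub hA, probReal_compl_eq_one_sub hA] at this
    change ν.real A - μ.real A ≤ r
    linarith

end TotalVariation

/-- `μ {x} - ν {x}` is truncated subtraction in `ℝ≥0∞`: the sum is the total excess of the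
masses of `μ` over those of `ν`. -/
lemma apply_le_add_tsum_tsub {α : Type*} [MeasurableSpace α] [Countable α]
    [MeasurableSingletonClass α] (μ ν : Measure α) {A : Set α} (hA : MeasurableSet A) :
    μ A ≤ ν A + ∑' x, (μ {x} - ν {x}) := by
  rw [← μ.tsum_indicator_apply_singleton A hA, ← ν.tsum_indicator_apply_singleton A hA,
    ← ENNReal.tsum_add]
  refine ENNReal.tsum_le_tsum fun x => ?_
  by_cases hx : x ∈ A
  · simpa [hx] using le_add_tsub
  · simp [hx]

lemma conv_apply_le_conv_apply_add_tvDist {M : Type*} [AddMonoid M] [MeasurableSpace M]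
    [MeasurableAdd₂ M] (μ ν ρ : Measure M) [IsProbabilityMeasure μ] [IsProbabilityMeasure ν]
    [IsProbabilityMeasure ρ] {A : Set M} (hA : MeasurableSet A) :
    (μ ∗ ρ) A ≤ (ν ∗ ρ) A + ENNReal.ofReal (tvDist μ ν) := by
  have hsum : MeasurableSet ((fun x : M × M => x.1 + x.2) ⁻¹' A) := measurable_add hA
  simp only [Measure.conv, Measure.map_apply measurable_add hA, Measure.prod_apply_symm hsum]
  refine (lintegral_mono fun y =>
    apply_le_add_tvDist (μ := μ) (ν := ν) (measurable_prodMk_right hsum)).trans_eq ?_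
  rw [lintegral_add_right _ measurable_const, lintegral_const, measure_univ, mul_one]

lemma tvDist_conv_conv_le {M : Type*} [AddCommMonoid M] [MeasurableSpace M] [MeasurableAdd₂ M]
    (μ₁ μ₂ ν₁ ν₂ : Measure M) [IsProbabilityMeasure μ₁] [IsProbabilityMeasure μ₂]
    [IsProbabilityMeasure ν₁] [IsProbabilityMeasure ν₂] :
    tvDist (μ₁ ∗ μ₂) (ν₁ ∗ ν₂) ≤ tvDist μ₁ ν₁ + tvDist μ₂ ν₂ := by
  refine tvDist_le_of_forall_le_add (add_nonneg tvDist_nonneg tvDist_nonneg) fun A hA => ?_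
  calc (μ₁ ∗ μ₂) A ≤ (ν₁ ∗ μ₂) A + ENNReal.ofReal (tvDist μ₁ ν₁) :=
        conv_apply_le_conv_apply_add_tvDist μ₁ ν₁ μ₂ hA
    _ ≤ (ν₁ ∗ ν₂) A + ENNReal.ofReal (tvDist μ₂ ν₂) + ENNReal.ofReal (tvDist μ₁ ν₁) := by
        rw [Measure.conv_comm ν₁, Measure.conv_comm ν₁]
        gcongr
        exact conv_apply_le_conv_apply_add_tvDist μ₂ ν₂ ν₁ hA
    _ = (ν₁ ∗ ν₂) A + ENNReal.ofReal (tvDist μ₁ ν₁ + tvDist μ₂ ν₂) := by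
        rw [ENNReal.ofReal_add tvDist_nonneg tvDist_nonneg, add_assoc, add_comm (ENNReal.ofReal _)]

lemma tvDist_poissonMeasure_le_sq {β : Measure ℕ} [IsProbabilityMeasure β] {p : ℝ≥0}
    (h₀ : β {0} = 1 - p) (h₁ : β {1} = p) (h₂ : ∀ k, 2 ≤ k → β {k} = 0) :
    tvDist β (poissonMeasure p) ≤ (p : ℝ) ^ 2 := by
  have hexp : 1 - (p : ℝ) ≤ Real.exp (-p) := by linarith [Real.add_one_le_exp (-(p : ℝ))]
  have hexcess : ∀ k, k ≠ 1 → β {k} - poissonMeasure p {k} = 0 := by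
    rintro (_ | _ | k) hk
    · rw [h₀, poissonMeasure_singleton, ← ENNReal.ofReal_one, ← ENNReal.ofReal_coe_nnreal,
        ← ENNReal.ofReal_sub _ p.coe_nonneg]
      exact tsub_eq_zero_of_le (ENNReal.ofReal_le_ofReal (by simpa using hexp))
    · exact absurd rfl hk
    · rw [h₂ _ (by omega), zero_tsub]
  have htsum : ∑' k, (β {k} - poissonMeasure p {k}) ≤ ENNReal.ofReal ((p : ℝ) ^ 2) := by
    rw [tsum_eq_single 1 hexcess, h₁, poissonMeasure_singleton, ← ENNReal.ofReal_coe_nnreal,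
      ← ENNReal.ofReal_sub _ (by positivity)]
    refine ENNReal.ofReal_le_ofReal ?_
    simp only [pow_one, Nat.factorial_one, Nat.cast_one, div_one]
    nlinarith [p.coe_nonneg]
  exact tvDist_le_of_forall_le_add (sq_nonneg _) fun A hA =>
    (apply_le_add_tsum_tsub β _ hA).trans (by gcongr)

lemma tvDist_map_poissonMeasure_le_sq {Ω : Type*} [MeasurableSpace Ω] (P : Measure Ω)
    [IsProbabilityMeasure P] {Y : Ω → ℕ} (hY : Measurable Y) (hval : ∀ ω, Y ω = 0 ∨ Y ω = 1)
    {p : ℝ≥0} (hp : P {ω | Y ω = 1} = p) :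
    tvDist (P.map Y) (poissonMeasure p) ≤ (p : ℝ) ^ 2 := by
  have : IsProbabilityMeasure (P.map Y) := Measure.isProbabilityMeasure_map hY.aemeasurable
  have hpre : ∀ k, Y ⁻¹' {k} = {ω | Y ω = k} := fun k => rfl
  refine tvDist_poissonMeasure_le_sq ?_ ?_ ?_
  · have : {ω | Y ω = 0} = {ω | Y ω = 1}ᶜ := by
      ext ω; rcases hval ω with h | h <;> simp [h]
    rw [Measure.map_apply hY (measurableSet_singleton 0), hpre, this,
      prob_compl_eq_one_sub (s := {ω | Y ω = 1}) (hY (measurableSet_singleton 1)), hp]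
  · rwa [Measure.map_apply hY (measurableSet_singleton 1)]
  · intro k hk
    rw [Measure.map_apply hY (measurableSet_singleton k), hpre, measure_eq_zero_iff_ae_notMem]
    exact ae_of_all _ fun ω (h : Y ω = k) => by rcases hval ω with h' | h' <;> omega

/-- Le Cam's inequality: if `X i` are independent Bernoulli(`p i`) random variables and
`Z` is Poisson with mean `M = ∑ p i`, then `d_TV(L(∑ X i), Poisson(M)) ≤ ∑ (p i)²`. -/
theorem stmt1 {Ω : Type*} [MeasurableSpace Ω] (P : Measure Ω) [IsProbabilityMeasure P]
    (n : ℕ) (X : Fin n → Ω → ℕ) (hmeas : ∀ i, Measurable (X i))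
    (hval : ∀ i ω, X i ω = 0 ∨ X i ω = 1)
    (hindep : iIndepFun X P)
    (p : Fin n → NNReal) (hp : ∀ i, P {ω | X i ω = 1} = (p i : ENNReal)) :
    tvDist (P.map (fun ω => ∑ i, X i ω)) (poissonMeasure (∑ i, p i)) ≤
      ∑ i, (p i : ℝ) ^ 2 := by
  suffices ∀ s : Finset (Fin n), tvDist (P.map (∑ i ∈ s, X i))
      (poissonMeasure (∑ i ∈ s, p i)) ≤ ∑ i ∈ s, (p i : ℝ) ^ 2 by
    simpa only [← Finset.sum_apply] using this Finset.univ
  intro s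
  induction s using Finset.induction_on with
  | empty =>
    simpa [Pi.zero_def] using
      tvDist_map_poissonMeasure_le_sq P measurable_const (fun _ => Or.inl rfl) (p := 0) (by simp)
  | insert a s ha ih =>
    have : IsProbabilityMeasure (P.map (X a)) :=
      Measure.isProbabilityMeasure_map (hmeas a).aemeasurable
    have hS : Measurable (∑ i ∈ s, X i) := by fun_prop
    have : IsProbabilityMeasure (P.map (∑ i ∈ s, X i)) :=
      Measure.isProbabilityMeasure_map hS.aemeasurable
    rw [Finset.sum_insert ha, Finset.sum_insert ha, Finset.sum_insert ha,
      (hindep.indepFun_finsetSum_of_notMem hmeas ha).symm.map_add_eq_map_conv_map (hmeas a) hS,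
      ← poissonMeasure_conv_poissonMeasure]
    exact (tvDist_conv_conv_le _ _ _ _).trans
      (add_le_add (tvDist_map_poissonMeasure_le_sq P (hmeas a) (hval a) (hp a)) ih)
end

section
/- The total variation distance between a Bernoulli(p) distribution and a Poisson(p) distribution is at most p². -/
/-!
On `{0, 1}` the Bernoulli(p) law puts masses `1 - p` and `p`, the Poisson(p) law `e^{-p}` and
`p e^{-p}`. Since `1 - p ≤ e^{-p}`, the Bernoulli law is dominated by `Po(p) + p² δ₁`, and a law
dominated by `ν + η`, with the same total mass as `ν`, is within `η(univ)` of `ν` in total variation.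
-/

open MeasureTheory ProbabilityTheory

open Set Real
open scoped ENNReal NNReal

theorem MeasureTheory.Measure.le_of_forall_singleton_le {α : Type*} [MeasurableSpace α]
    [Countable α] [MeasurableSingletonClass α] {μ ν : Measure α} (h : ∀ a, μ {a} ≤ ν {a}) :
    μ ≤ ν := by
  rw [← Measure.sum_smul_dirac μ, ← Measure.sum_smul_dirac ν]
  refine Measure.le_iff.2 fun s hs => ?_
  simp only [Measure.sum_apply _ hs, Measure.smul_apply, smul_eq_mul]
  exact ENNReal.tsum_le_tsum fun a => mul_le_mul_left (h a) _

theorem isProbabilityMeasure_smul_dirac_add_smul_dirac {X : Type*} [MeasurableSpace X]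
    {p : ℝ≥0∞} (hp : p ≤ 1) (a b : X) :
    IsProbabilityMeasure (p • Measure.dirac a + (1 - p) • Measure.dirac b) :=
  ⟨by simp [add_tsub_cancel_of_le hp]⟩

theorem tvDist_le_of_le_add {X : Type*} [MeasurableSpace X] {μ ν η : Measure X}
    [IsFiniteMeasure μ] [IsFiniteMeasure ν] [IsFiniteMeasure η]
    (huniv : μ univ = ν univ) (hle : μ ≤ ν + η) : tvDist μ ν ≤ η.real univ := by
  have hle_real (s : Set X) : μ.real s ≤ ν.real s + η.real s := by
    rw [← measureReal_add_apply]
    exact ENNReal.toReal_mono (measure_ne_top _ _) (hle s)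
  have huniv_real : μ.real univ = ν.real univ := by rw [measureReal_def, huniv, measureReal_def]
  refine ciSup_le fun ⟨A, hA⟩ => ?_
  change |μ.real A - ν.real A| ≤ η.real univ
  have hA_le := hle_real A
  -- the bound on `Aᶜ` is a bound on `ν A - μ A`, since the total masses agree
  have hAc_le := hle_real Aᶜ
  rw [measureReal_compl hA, measureReal_compl hA, measureReal_compl hA, huniv_real] at hAc_le
  rw [abs_sub_le_iff]
  constructor <;>
    linarith [measureReal_mono (μ := η) (subset_univ A), measureReal_nonneg (μ := η) (s := A)]

theorem bernoulli_le_poissonMeasure_add_smul_dirac (p : ℝ≥0) :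
    (p : ℝ≥0∞) • Measure.dirac (1 : ℕ) + (1 - (p : ℝ≥0∞)) • Measure.dirac (0 : ℕ)
      ≤ poissonMeasure p + (p ^ 2) • Measure.dirac 1 := by
  refine Measure.le_of_forall_singleton_le fun n => ?_
  have hexp : 1 - (p : ℝ) ≤ exp (-p) := one_sub_le_exp_neg _
  rcases n with _ | _ | n
  · have hat_zero : (1 : ℝ≥0∞) ≤ ENNReal.ofReal (exp (-p)) + p := by
      rw [← ENNReal.ofReal_coe_nnreal, ← ENNReal.ofReal_add (exp_pos _).le p.coe_nonneg,
        ← ENNReal.ofReal_one]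
      exact ENNReal.ofReal_le_ofReal (by linarith)
    simpa [poissonMeasure_singleton] using hat_zero
  · have hat_one : (p : ℝ≥0∞) ≤ ENNReal.ofReal (exp (-p) * p) + p ^ 2 := by
      rw [← ENNReal.ofReal_coe_nnreal, ← ENNReal.ofReal_pow p.coe_nonneg 2,
        ← ENNReal.ofReal_add (by positivity) (by positivity)]
      exact ENNReal.ofReal_le_ofReal (by nlinarith [p.coe_nonneg])
    simpa [poissonMeasure_singleton] using hat_one
  · simp

/-- The total variation distance between a Bernoulli(p) distribution (on ℕ) and a
Poisson(p) distribution is at most `p²`. -/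
theorem stmt2 (p : NNReal) (hp : p ≤ 1) :
    tvDist ((p : ENNReal) • Measure.dirac (1 : ℕ) + (1 - (p : ENNReal)) • Measure.dirac (0 : ℕ))
      (poissonMeasure p) ≤ (p : ℝ) ^ 2 := by
  have := isProbabilityMeasure_smul_dirac_add_smul_dirac (ENNReal.coe_le_one_iff.2 hp) 1 0
  calc _ ≤ ((p ^ 2) • Measure.dirac (1 : ℕ)).real univ :=
        tvDist_le_of_le_add (by simp) (bernoulli_le_poissonMeasure_add_smul_dirac p)
    _ = (p : ℝ) ^ 2 := by simp
end
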